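/- Let F be an automorphism of ℂ² of the form F(z,w) = (z + f(w)z² + O(z³), λw + g(w)z + O(z²)) with f(0) = 1 and λ = e^{2πiθ}, θ Diophantine. Then F fixes the line {0} × ℂ pointwise up to rotation, F^n(0,w) = (0, λ^n w), and the second z-derivative of the first coordinate of F^n along this line satisfies ∂²π₁(F^n)/∂z²(0,w) = 2∑_{k=0}^{n−1} f(λ^k w), which tends to ∞ in absolute value as n → ∞. Consequently no point (0,w) belongs to the Fatou set of F. -/

import Mathlib

/-!
On the invariant line `{0} × ℂ` the first coordinate of `F` is `z + z² H(z, w)` with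
`H(0, w) = f(w)`, so by induction the slice `z ↦ (Fⁿ(z, w)).1` has derivative `1` at `0`, and
its second derivative gains `2 f(λⁿ w)` at each step. Writing `f(ζ) - f(0) = ∑ aⱼ ζʲ`, the
Birkhoff sum `∑_{k<n} (f(λᵏ w) - 1)` equals `∑ⱼ aⱼ wʲ ∑_{k<n} λ^{jk}`; the Diophantine condition
`c j^{-r} ≤ ‖λʲ - 1‖` bounds each geometric sum by `2 j^r / c`, a polynomial loss that the
entire series absorbs. Hence the second derivatives grow like `2n`. A subsequence of iterates
converging locally uniformly near `(0, w)` would make them converge (Weierstrass), and compact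
divergence is impossible because the orbit of `(0, w)` stays on a circle.
-/

open Filter Finset

theorem le_pow_ceil_mul_of_mul_rpow_neg_le {c r x : ℝ} {n : ℕ} (hc : 0 ≤ c) (hn : 1 ≤ n)
    (h : c * (n : ℝ) ^ (-r) ≤ x) : c ≤ (n : ℝ) ^ ⌈r⌉₊ * x := by
  have hn' : (1 : ℝ) ≤ n := by exact_mod_cast hn
  calc c = (n : ℝ) ^ ⌈r⌉₊ * (c * (n : ℝ) ^ (-(⌈r⌉₊ : ℝ))) := by
        rw [Real.rpow_neg (by positivity), Real.rpow_natCast]; field_simp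
    _ ≤ (n : ℝ) ^ ⌈r⌉₊ * x := by
        gcongr
        refine le_trans ?_ h
        gcongr
        exact Nat.le_ceil r

theorem norm_sub_one_mul_norm_geom_sum_le {R : Type*} [NormedDivisionRing R] {x : R}
    (hx : ‖x‖ ≤ 1) (n : ℕ) : ‖x - 1‖ * ‖∑ k ∈ range n, x ^ k‖ ≤ 2 := by
  calc ‖x - 1‖ * ‖∑ k ∈ range n, x ^ k‖ = ‖x ^ n - 1‖ := by
        rw [← norm_mul, mul_geom_sum]
    _ ≤ ‖x ^ n‖ + ‖(1 : R)‖ := norm_sub_le _ _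
    _ ≤ 2 := by
        rw [norm_pow, norm_one]
        linarith [pow_le_one₀ (norm_nonneg x) hx (n := n)]

theorem FormalMultilinearSeries.summable_pow_mul_norm_mul_pow {𝕜 E F : Type*}
    [NontriviallyNormedField 𝕜] [NormedAddCommGroup E] [NormedSpace 𝕜 E]
    [NormedAddCommGroup F] [NormedSpace 𝕜 F] (p : FormalMultilinearSeries 𝕜 E F)
    {ρ : NNReal} (h : (ρ : ENNReal) < p.radius) (m : ℕ) :
    Summable fun j : ℕ => (j : ℝ) ^ m * (‖p j‖ * ρ ^ j) := by
  obtain ⟨α, hα, C, -, hC⟩ := p.norm_mul_pow_le_mul_pow_of_lt_radius h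
  have hgeom : Summable fun j : ℕ => (j : ℝ) ^ m * α ^ j :=
    summable_pow_mul_geometric_of_norm_lt_one m (by rw [Real.norm_of_nonneg hα.1.le]; exact hα.2)
  refine .of_nonneg_of_le (fun j => by positivity) (fun j => ?_) (hgeom.mul_left C)
  calc (j : ℝ) ^ m * (‖p j‖ * ρ ^ j) ≤ (j : ℝ) ^ m * (C * α ^ j) :=
        mul_le_mul_of_nonneg_left (hC j) (by positivity)
    _ = C * ((j : ℝ) ^ m * α ^ j) := by ring

section Diophantine

variable {l : ℂ} {c : ℝ} {m : ℕ} (hl : ‖l‖ = 1) (hc : 0 < c)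
  (hdio : ∀ n : ℕ, 1 ≤ n → c ≤ (n : ℝ) ^ m * ‖l ^ n - 1‖)
include hl hc hdio

theorem norm_geom_sum_pow_le_of_diophantine {j : ℕ} (hj : 1 ≤ j) (n : ℕ) :
    ‖∑ k ∈ range n, (l ^ j) ^ k‖ ≤ 2 / c * (j : ℝ) ^ m := by
  rw [div_mul_eq_mul_div, le_div_iff₀ hc]
  calc ‖∑ k ∈ range n, (l ^ j) ^ k‖ * c
      ≤ ‖∑ k ∈ range n, (l ^ j) ^ k‖ * ((j : ℝ) ^ m * ‖l ^ j - 1‖) := by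
        gcongr; exact hdio j hj
    _ = (j : ℝ) ^ m * (‖l ^ j - 1‖ * ‖∑ k ∈ range n, (l ^ j) ^ k‖) := by ring
    _ ≤ (j : ℝ) ^ m * 2 := by
        gcongr
        exact norm_sub_one_mul_norm_geom_sum_le (by rw [norm_pow, hl, one_pow]) n
    _ = 2 * (j : ℝ) ^ m := mul_comm _ _

theorem exists_forall_norm_sum_comp_rotation_sub_le {f : ℂ → ℂ} (hf : Differentiable ℂ f)
    (w : ℂ) : ∃ M, ∀ n : ℕ, ‖∑ k ∈ range n, f (l ^ k * w) - n * f 0‖ ≤ M := by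
  obtain ⟨p, hp⟩ : ∃ p, HasFPowerSeriesOnBall f p 0 ⊤ :=
    ⟨_, hf.hasFPowerSeriesOnBall 0 one_pos⟩
  have htaylor : ∀ z, HasSum (fun j => p.coeff (j + 1) * z ^ (j + 1)) (f z - f 0) := by
    intro z
    have h := hp.hasSum (y := z) (by simp)
    simp only [FormalMultilinearSeries.apply_eq_pow_smul_coeff, smul_eq_mul, zero_add] at h
    rw [← hasSum_nat_add_iff' 1] at h
    have hcoeff0 : p.coeff 0 = f 0 := hp.coeff_zero _
    simpa [mul_comm, hcoeff0] using h
  set majorant : ℕ → ℝ :=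
    fun j => 2 / c * (((j + 1 : ℕ) : ℝ) ^ m * (‖p (j + 1)‖ * ‖w‖ ^ (j + 1)))
  have hmajorant : Summable majorant := by
    have h := p.summable_pow_mul_norm_mul_pow (ρ := ‖w‖₊)
      (hp.r_le.trans_lt' ENNReal.coe_lt_top) m
    rw [← summable_nat_add_iff 1] at h
    simpa only [coe_nnnorm] using h.mul_left (2 / c)
  refine ⟨∑' j, majorant j, fun n => ?_⟩
  have hsum : HasSum (fun j => p.coeff (j + 1) * w ^ (j + 1) * ∑ k ∈ range n, (l ^ (j + 1)) ^ k)
      (∑ k ∈ range n, f (l ^ k * w) - n * f 0) := by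
    convert hasSum_sum (fun k _ => htaylor (l ^ k * w)) using 1
    · ext j
      rw [mul_sum]
      exact sum_congr rfl fun k _ => by ring
    · simp [sum_sub_distrib]
  refine hsum.norm_le_of_bounded hmajorant.hasSum fun j => ?_
  rw [norm_mul, norm_mul, norm_pow]
  simp only [majorant, FormalMultilinearSeries.norm_apply_eq_norm_coef]
  calc ‖p.coeff (j + 1)‖ * ‖w‖ ^ (j + 1) * ‖∑ k ∈ range n, (l ^ (j + 1)) ^ k‖
      ≤ ‖p.coeff (j + 1)‖ * ‖w‖ ^ (j + 1) * (2 / c * ((j + 1 : ℕ) : ℝ) ^ m) := by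
        gcongr
        exact norm_geom_sum_pow_le_of_diophantine hl hc hdio (Nat.le_add_left 1 j) n
    _ = _ := by ring

theorem tendsto_norm_sum_comp_rotation_atTop {f : ℂ → ℂ} (hf : Differentiable ℂ f)
    (hf0 : f 0 ≠ 0) (w : ℂ) :
    Tendsto (fun n : ℕ => ‖∑ k ∈ range n, f (l ^ k * w)‖) atTop atTop := by
  obtain ⟨M, hM⟩ := exists_forall_norm_sum_comp_rotation_sub_le hl hc hdio hf w
  have hlin : Tendsto (fun n : ℕ => n * ‖f 0‖ - M) atTop atTop :=
    tendsto_atTop_add_const_right _ _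
      (tendsto_natCast_atTop_atTop.atTop_mul_const (norm_pos_iff.mpr hf0))
  refine tendsto_atTop_mono (fun n => ?_) hlin
  have := norm_sub_norm_le (n * f 0) (n * f 0 - ∑ k ∈ range n, f (l ^ k * w))
  rw [sub_sub_cancel, norm_sub_rev, norm_mul, Complex.norm_natCast] at this
  linarith [hM n]

end Diophantine

section SecondDerivative

variable {𝕜 : Type*} [NontriviallyNormedField 𝕜] {u H : 𝕜 → 𝕜} {x : 𝕜}

theorem deriv_add_sq_mul_of_eq_zero (hu : ContDiffAt 𝕜 1 u x) (hH : ContDiffAt 𝕜 1 H x)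
    (hux : u x = 0) : deriv (fun z => u z + u z ^ 2 * H z) x = deriv u x := by
  simp only [← iteratedDeriv_one, sq]
  rw [iteratedDeriv_fun_add hu ((hu.mul hu).mul hH), iteratedDeriv_fun_mul (hu.mul hu) hH]
  simp [sum_range_succ, hux, iteratedDeriv_fun_mul hu hu, -iteratedDeriv_one]

theorem iteratedDeriv_two_add_sq_mul_of_eq_zero (hu : ContDiffAt 𝕜 2 u x)
    (hH : ContDiffAt 𝕜 2 H x) (hux : u x = 0) :
    iteratedDeriv 2 (fun z => u z + u z ^ 2 * H z) x
      = iteratedDeriv 2 u x + 2 * deriv u x ^ 2 * H x := by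
  have hu1 : ContDiffAt 𝕜 1 u x := hu.of_le one_le_two
  simp only [sq]
  rw [iteratedDeriv_fun_add hu ((hu.mul hu).mul hH), iteratedDeriv_fun_mul (hu.mul hu) hH]
  simp [sum_range_succ, hux, iteratedDeriv_fun_mul hu hu, iteratedDeriv_fun_mul hu1 hu1, mul_assoc]

end SecondDerivative

section Dynamics

variable {F : ℂ × ℂ → ℂ × ℂ} {l : ℂ}

theorem iterate_zero_mk_of_apply_zero_mk (hF0 : ∀ w, F (0, w) = (0, l * w)) (n : ℕ) (w : ℂ) :
    F^[n] (0, w) = (0, l ^ n * w) := by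
  induction n with
  | zero => simp
  | succ n ih => rw [Function.iterate_succ_apply', ih, hF0, pow_succ', mul_assoc]

theorem deriv_fst_iterate_eq_one_and_iteratedDeriv_two {H : ℂ × ℂ → ℂ}
    (hFd : Differentiable ℂ F) (hH : Differentiable ℂ H)
    (hF : ∀ p, (F p).1 = p.1 + p.1 ^ 2 * H p) (hF0 : ∀ w, F (0, w) = (0, l * w))
    (w : ℂ) (n : ℕ) :
    deriv (fun z => (F^[n] (z, w)).1) 0 = 1 ∧
      iteratedDeriv 2 (fun z => (F^[n] (z, w)).1) 0 = 2 * ∑ k ∈ range n, H (0, l ^ k * w) := by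
  induction n with
  | zero => simp [iteratedDeriv_fun_id_zero]
  | succ n ih =>
    have hslice : Differentiable ℂ fun z : ℂ => F^[n] (z, w) :=
      (hFd.iterate n).comp (differentiable_id.prodMk (differentiable_const w))
    have hu : ContDiffAt ℂ 2 (fun z => (F^[n] (z, w)).1) 0 := hslice.fst.contDiff.contDiffAt
    have hHn : ContDiffAt ℂ 2 (fun z => H (F^[n] (z, w))) 0 :=
      (hH.comp hslice).contDiff.contDiffAt
    have horbit := iterate_zero_mk_of_apply_zero_mk hF0 n w
    have hu0 : (F^[n] (0, w)).1 = 0 := by rw [horbit]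
    have hrec : (fun z => (F^[n + 1] (z, w)).1)
        = fun z => (F^[n] (z, w)).1 + (F^[n] (z, w)).1 ^ 2 * H (F^[n] (z, w)) := by
      ext z; rw [Function.iterate_succ_apply', hF]
    rw [hrec, deriv_add_sq_mul_of_eq_zero (hu.of_le one_le_two) (hHn.of_le one_le_two) hu0,
      iteratedDeriv_two_add_sq_mul_of_eq_zero hu hHn hu0, ih.1, ih.2, horbit, sum_range_succ]
    exact ⟨rfl, by ring⟩

end Dynamics

theorem TendstoLocallyUniformlyOn.iteratedDeriv {ι : Type*} {p : Filter ι} {u : ι → ℂ → ℂ}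
    {g : ℂ → ℂ} {S : Set ℂ} (h : TendstoLocallyUniformlyOn u g p S)
    (hu : ∀ i, Differentiable ℂ (u i)) (hS : IsOpen S) (k : ℕ) :
    TendstoLocallyUniformlyOn (fun i => iteratedDeriv k (u i)) (iteratedDeriv k g) p S := by
  induction k with
  | zero => simpa using h
  | succ k ih =>
    simpa only [iteratedDeriv_succ, Function.comp_def] using ih.deriv
      (.of_forall fun i => ((hu i).contDiff.differentiable_iteratedDeriv' k).differentiableOn) hS

theorem not_tendstoLocallyUniformlyOn_of_tendsto_norm_iteratedDeriv
    {Φ : ℕ → ℂ × ℂ → ℂ × ℂ} (hΦ : ∀ j, Differentiable ℂ (Φ j)) {U : Set (ℂ × ℂ)}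
    (hU : IsOpen U) {w : ℂ} (hw : (0, w) ∈ U) {k : ℕ}
    (hblow : Tendsto (fun j => ‖iteratedDeriv k (fun z => (Φ j (z, w)).1) 0‖) atTop atTop)
    (G : ℂ × ℂ → ℂ × ℂ) : ¬ TendstoLocallyUniformlyOn Φ G atTop U := by
  intro hconv
  have hmk : Continuous fun z : ℂ => (z, w) := continuous_id.prodMk continuous_const
  have hslice : TendstoLocallyUniformlyOn (fun j z => (Φ j (z, w)).1) (fun z => (G (z, w)).1)
      atTop {z | (z, w) ∈ U} :=
    uniformContinuous_fst.comp_tendstoLocallyUniformlyOn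
      (hconv.comp _ (fun _ hz => hz) hmk.continuousOn)
  have hlim := (hslice.iteratedDeriv
    (fun j => ((hΦ j).comp (differentiable_id.prodMk (differentiable_const w))).fst)
    (hU.preimage hmk) k).tendsto_at hw
  exact not_tendsto_atTop_of_tendsto_nhds hlim.norm hblow

theorem stmt10_general (θ : ℝ) (l : ℂ) (hl : l = Complex.exp (2 * Real.pi * Complex.I * θ))
    (hdio : ∃ c r : ℝ, 0 < c ∧ 0 < r ∧ ∀ n : ℕ, 1 ≤ n →
      c * (n : ℝ) ^ (-r) ≤ ‖l ^ n - 1‖)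
    (F : ℂ × ℂ → ℂ × ℂ) (hFdiff : Differentiable ℂ F)
    (f g : ℂ → ℂ) (hfd : Differentiable ℂ f)
    (hf0 : f 0 = 1)
    (e₁ e₂ : ℂ × ℂ → ℂ) (he₁ : Differentiable ℂ e₁)
    (hF : ∀ z w : ℂ,
      F (z, w) = (z + f w * z ^ 2 + z ^ 3 * e₁ (z, w),
                  l * w + g w * z + z ^ 2 * e₂ (z, w))) :
    (∀ (n : ℕ) (w : ℂ), F^[n] (0, w) = (0, l ^ n * w)) ∧
    (∀ (n : ℕ) (w : ℂ), iteratedDeriv 2 (fun z : ℂ => (F^[n] (z, w)).1) 0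
        = 2 * ∑ k ∈ Finset.range n, f (l ^ k * w)) ∧
    (∀ w : ℂ, Tendsto (fun n : ℕ => ‖iteratedDeriv 2 (fun z : ℂ => (F^[n] (z, w)).1) 0‖)
        atTop atTop) ∧
    (∀ w : ℂ, ¬ ∃ U : Set (ℂ × ℂ), IsOpen U ∧ (0, w) ∈ U ∧
      ∀ φ : ℕ → ℕ, StrictMono φ → ∃ ψ : ℕ → ℕ, StrictMono ψ ∧
        ((∃ G : ℂ × ℂ → ℂ × ℂ,
            TendstoLocallyUniformlyOn (fun j : ℕ => F^[φ (ψ j)]) G atTop U) ∨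
         (∀ K L : Set (ℂ × ℂ), K ⊆ U → IsCompact K → IsCompact L →
            ∀ᶠ j in atTop, ∀ p ∈ K, F^[φ (ψ j)] p ∉ L))) := by
  obtain ⟨c, r, hc, -, hdio⟩ := hdio
  have hl1 : ‖l‖ = 1 := by
    rw [hl, show 2 * Real.pi * Complex.I * θ = ((2 * Real.pi * θ : ℝ) : ℂ) * Complex.I by
      push_cast; ring]
    exact Complex.norm_exp_ofReal_mul_I _
  have hF0 : ∀ w, F (0, w) = (0, l * w) := fun w => by simp [hF]
  have hF1 : ∀ p : ℂ × ℂ, (F p).1 = p.1 + p.1 ^ 2 * (f p.2 + p.1 * e₁ p) := fun p => by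
    rw [hF]; ring
  have horbit := iterate_zero_mk_of_apply_zero_mk hF0
  have hderiv2 : ∀ (n : ℕ) (w : ℂ), iteratedDeriv 2 (fun z : ℂ => (F^[n] (z, w)).1) 0
      = 2 * ∑ k ∈ range n, f (l ^ k * w) := fun n w => by
    simpa using (deriv_fst_iterate_eq_one_and_iteratedDeriv_two hFdiff (by fun_prop) hF1 hF0 w n).2
  have hblow : ∀ w : ℂ, Tendsto
      (fun n : ℕ => ‖iteratedDeriv 2 (fun z : ℂ => (F^[n] (z, w)).1) 0‖) atTop atTop := fun w => by
    simpa [hderiv2] using (tendsto_norm_sum_comp_rotation_atTop hl1 hc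
      (fun n hn => le_pow_ceil_mul_of_mul_rpow_neg_le hc.le hn (hdio n hn)) hfd
      (by simp [hf0]) w).const_mul_atTop two_pos
  refine ⟨horbit, hderiv2, hblow, ?_⟩
  rintro w ⟨U, hU, hwU, hnormal⟩
  obtain ⟨ψ, hψ, ⟨G, hG⟩ | hdiv⟩ := hnormal id strictMono_id
  · exact not_tendstoLocallyUniformlyOn_of_tendsto_norm_iteratedDeriv
      (fun j => hFdiff.iterate _) hU hwU ((hblow w).comp hψ.tendsto_atTop) G hG
  · obtain ⟨j, hj⟩ := (hdiv {(0, w)} (Metric.closedBall 0 ‖w‖) (by simpa) isCompact_singleton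
      (isCompact_closedBall _ _)).exists
    exact hj _ rfl (by simp [horbit, hl1])

/-- For an automorphism
`F(z,w) = (z + f(w)z² + O(z³), λw + g(w)z + O(z²))` with `f(0)=1`, `g(w)=O(w²)`
and `λ = e^{2πiθ}`, `θ` Diophantine: `F^n(0,w) = (0,λ^n w)`, the second
`z`-derivative of the first coordinate of `F^n` at `(0,w)` equals
`2∑_{k<n} f(λ^k w)` and blows up; consequently no point `(0,w)` lies in the
Fatou set of `F` (normality allowing compact divergence). -/
theorem stmt10 (θ : ℝ) (l : ℂ) (hl : l = Complex.exp (2 * Real.pi * Complex.I * θ))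
    (hdio : ∃ c r : ℝ, 0 < c ∧ 0 < r ∧ ∀ n : ℕ, 1 ≤ n →
      c * (n : ℝ) ^ (-r) ≤ ‖l ^ n - 1‖)
    (F : ℂ × ℂ → ℂ × ℂ) (hFbij : Function.Bijective F) (hFdiff : Differentiable ℂ F)
    (f g : ℂ → ℂ) (hfd : Differentiable ℂ f) (hgd : Differentiable ℂ g)
    (hf0 : f 0 = 1)
    (g₁ : ℂ → ℂ) (hg₁ : Differentiable ℂ g₁) (hgO : ∀ w : ℂ, g w = w ^ 2 * g₁ w)
    (e₁ e₂ : ℂ × ℂ → ℂ) (he₁ : Differentiable ℂ e₁) (he₂ : Differentiable ℂ e₂)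
    (hF : ∀ z w : ℂ,
      F (z, w) = (z + f w * z ^ 2 + z ^ 3 * e₁ (z, w),
                  l * w + g w * z + z ^ 2 * e₂ (z, w))) :
    (∀ (n : ℕ) (w : ℂ), F^[n] (0, w) = (0, l ^ n * w)) ∧
    (∀ (n : ℕ) (w : ℂ), iteratedDeriv 2 (fun z : ℂ => (F^[n] (z, w)).1) 0
        = 2 * ∑ k ∈ Finset.range n, f (l ^ k * w)) ∧
    (∀ w : ℂ, Tendsto (fun n : ℕ => ‖iteratedDeriv 2 (fun z : ℂ => (F^[n] (z, w)).1) 0‖)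
        atTop atTop) ∧
    (∀ w : ℂ, ¬ ∃ U : Set (ℂ × ℂ), IsOpen U ∧ (0, w) ∈ U ∧
      ∀ φ : ℕ → ℕ, StrictMono φ → ∃ ψ : ℕ → ℕ, StrictMono ψ ∧
        ((∃ G : ℂ × ℂ → ℂ × ℂ,
            TendstoLocallyUniformlyOn (fun j : ℕ => F^[φ (ψ j)]) G atTop U) ∨
         (∀ K L : Set (ℂ × ℂ), K ⊆ U → IsCompact K → IsCompact L →
            ∀ᶠ j in atTop, ∀ p ∈ K, F^[φ (ψ j)] p ∉ L))) :=
  stmt10_general θ l hl hdio F hFdiff f g hfd hf0 e₁ e₂ he₁ hF
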